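/- arXiv:math/9911037 — 2 statements merged into one kernel-verified Lean document; each statement's English description precedes it below -/
import Mathlib

section
/- Suppose |||·||| is a norm on Y and ε > 0 satisfies ε‖x‖_Y ≤ |||x||| ≤ ‖x‖_Y for all x ∈ Y, and suppose δ ∈ (0,1) is such that for every x with |||x||| ≤ 1 and every sequence (x_n) with |||x_n||| ≤ 1 for all n which is ε-separated with respect to |||·|||, there exists n with |||x + x_n|||/2 ≤ 1 − δ. Let n ∈ ℕ ∪ {0} and let Φ = {φ ∈ T : |φ| = n}. Then for every m with 0 ≤ m ≤ n, every subset Φ' of Φ with |Φ'| = 2^m, and every p ∈ ℕ, there exists an acceptable set A ⊆ ⋃_{φ∈Φ'} S_φ such that |A| = 2^m, min{|φ| : φ ∈ A} ≥ p, and |||χ_A||| ≤ 2^m (1−δ)^m. -/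
open scoped BigOperators

/-- A node of the dyadic tree `T = ⋃ₙ {0,1}ⁿ`, modelled as a finite list of booleans.
The tree order `φ ≤ ψ` is the prefix order `φ <+: ψ`; the length of a node is its
list length. -/
abbrev Node : Type := List Bool

/-- The subtree `T_φ` consisting of all nodes `ψ` with `φ ≤ ψ`. -/
def Tsub (φ : Node) : Set Node := {ψ | φ <+: ψ}

/-- `S_φ`: the set of nodes extending `φ` by zeroes (`false`s) only. -/
def Sset (φ : Node) : Set Node := {ψ | ∃ k : ℕ, ψ = φ ++ List.replicate k false}

/-- Two nodes are incomparable if neither is a prefix of the other. -/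
def Incomparable (φ ψ : Node) : Prop := ¬ φ <+: ψ ∧ ¬ ψ <+: φ

/-- A finite set `A ⊆ T` is admissible if there is `n` such that every element of `A`
lies in some subtree `T_σ` with `|σ| = n`, and each such subtree contains at most one
element of `A`. -/
def Admissible (A : Finset Node) : Prop :=
  ∃ n : ℕ,
    (∀ φ ∈ A, ∃ σ : Node, σ.length = n ∧ σ <+: φ) ∧
    (∀ σ : Node, σ.length = n → ∀ φ ∈ A, ∀ ψ ∈ A, σ <+: φ → σ <+: ψ → φ = ψ)

/-- A finite set `A ⊆ T` is acceptable if there is `n` such that every element of `A`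
lies in some set `S_σ` with `|σ| = n`, and each such set contains at most one
element of `A`. -/
def Acceptable (A : Finset Node) : Prop :=
  ∃ n : ℕ,
    (∀ φ ∈ A, ∃ σ : Node, σ.length = n ∧ φ ∈ Sset σ) ∧
    (∀ σ : Node, σ.length = n → ∀ φ ∈ A, ∀ ψ ∈ A, φ ∈ Sset σ → ψ ∈ Sset σ → φ = ψ)

/-- `Before A B` is the relation `A ≪ B`: every node of `A` is strictly shorter than
every node of `B`. -/
def Before (A B : Finset Node) : Prop :=
  ∀ φ ∈ A, ∀ ψ ∈ B, φ.length < ψ.length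

/-- The norm `‖·‖_X` on `c₀₀(T)` (finitely supported functions on the tree, modelled
as `Node →₀ ℝ`): the supremum of `(∑ᵢ (∑_{φ ∈ Aᵢ} |x φ|)²)^{1/2}` over all finite
chains `A₁ ≪ ⋯ ≪ A_k` of admissible sets. -/
noncomputable def normX (x : Node →₀ ℝ) : ℝ :=
  sSup { r : ℝ | ∃ (k : ℕ) (A : Fin k → Finset Node),
    (∀ i, Admissible (A i)) ∧ (∀ i j : Fin k, i < j → Before (A i) (A j)) ∧
    r = Real.sqrt (∑ i, (∑ φ ∈ A i, |x φ|) ^ 2) }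

/-- The norm `‖·‖_Y` on `c₀₀(T)`: as `normX` but with acceptable sets. -/
noncomputable def normY (x : Node →₀ ℝ) : ℝ :=
  sSup { r : ℝ | ∃ (k : ℕ) (A : Fin k → Finset Node),
    (∀ i, Acceptable (A i)) ∧ (∀ i j : Fin k, i < j → Before (A i) (A j)) ∧
    r = Real.sqrt (∑ i, (∑ φ ∈ A i, |x φ|) ^ 2) }

/-- The characteristic function `χ_A` of a finite set of nodes, as an element of
`c₀₀(T)`. -/
noncomputable def chi (A : Finset Node) : Node →₀ ℝ :=
  Finsupp.indicator A fun _ _ => (1 : ℝ)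

open Classical in
/-- The sup norm `‖y·χ_S‖_∞` of the restriction of `y` to a set `S` of nodes. -/
noncomputable def supOn (y : Node →₀ ℝ) (S : Set Node) : ℝ :=
  sSup (Set.range fun ψ : Node => if ψ ∈ S then |y ψ| else 0)

/-- A branch of the dyadic tree, identified with an infinite 0-1 sequence. -/
abbrev Branch : Type := ℕ → Bool

/-- The node of length `n` on the branch `γ`. -/
def branchNode (γ : Branch) (n : ℕ) : Node := List.ofFn fun i : Fin n => γ i

/-- A branch `γ` passes through the node `φ` iff `φ ∈ γ`. -/
def PassesThrough (γ : Branch) (φ : Node) : Prop := branchNode γ φ.length = φ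

/-- A sequence is `ε`-separated: `inf {‖x_n - x_m‖ : m ≠ n} ≥ ε`. -/
def Separated {Z : Type*} [SeminormedAddGroup Z] (ε : ℝ) (x : ℕ → Z) : Prop :=
  ∀ m n : ℕ, m ≠ n → ε ≤ ‖x m - x n‖

/-- `ε`-separation with respect to a norm function `N`. -/
def SeparatedWith {Z : Type*} [AddGroup Z] (N : Z → ℝ) (ε : ℝ) (x : ℕ → Z) : Prop :=
  ∀ m n : ℕ, m ≠ n → ε ≤ N (x m - x n)

/-- `N` is a norm on the real vector space `Z`. -/
def IsNormF {Z : Type*} [AddCommGroup Z] [Module ℝ Z] (N : Z → ℝ) : Prop :=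
  (∀ x y : Z, N (x + y) ≤ N x + N y) ∧
  (∀ (a : ℝ) (x : Z), N (a • x) = |a| * N x) ∧
  (∀ x : Z, N x = 0 → x = 0)

/-- The `2`-NUC property with respect to a norm function `N`. -/
def TwoNUCWith {Z : Type*} [AddCommGroup Z] (N : Z → ℝ) : Prop :=
  ∀ ε : ℝ, 0 < ε → ∃ δ : ℝ, 0 < δ ∧ δ < 1 ∧
    ∀ u : ℕ → Z, (∀ n, N (u n) ≤ 1) → SeparatedWith N ε u →
      ∃ n₁ n₂ : ℕ, n₁ < n₂ ∧ N (u n₁ + u n₂) / 2 ≤ 1 - δ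

/-- The `1`-β property with respect to a norm function `N`. -/
def OneBetaWith {Z : Type*} [AddCommGroup Z] (N : Z → ℝ) : Prop :=
  ∀ ε : ℝ, 0 < ε → ∃ δ : ℝ, 0 < δ ∧ δ < 1 ∧
    ∀ x : Z, N x ≤ 1 → ∀ u : ℕ → Z, (∀ n, N (u n) ≤ 1) → SeparatedWith N ε u →
      ∃ n : ℕ, N (x + u n) / 2 ≤ 1 - δ

/-- The property `k`-β of a Banach space. -/
def kBeta (k : ℕ) (Z : Type*) [NormedAddCommGroup Z] : Prop :=
  ∀ ε : ℝ, 0 < ε → ∃ δ : ℝ, 0 < δ ∧ δ < 1 ∧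
    ∀ x : Z, ‖x‖ ≤ 1 → ∀ u : ℕ → Z, (∀ n, ‖u n‖ ≤ 1) → Separated ε u →
      ∃ ι : Fin k → ℕ, StrictMono ι ∧ ‖x + ∑ i, u (ι i)‖ / ((k : ℝ) + 1) ≤ 1 - δ

/-- The property `k`-NUC of a Banach space. -/
def kNUC (k : ℕ) (Z : Type*) [NormedAddCommGroup Z] : Prop :=
  ∀ ε : ℝ, 0 < ε → ∃ δ : ℝ, 0 < δ ∧ δ < 1 ∧
    ∀ u : ℕ → Z, (∀ n, ‖u n‖ ≤ 1) → Separated ε u →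
      ∃ ι : Fin k → ℕ, StrictMono ι ∧ ‖∑ i, u (ι i)‖ / (k : ℝ) ≤ 1 - δ

/-- Nearly uniform convexity. -/
def NUC (Z : Type*) [NormedAddCommGroup Z] [NormedSpace ℝ Z] : Prop :=
  ∀ ε : ℝ, 0 < ε → ∃ δ : ℝ, δ < 1 ∧
    ∀ u : ℕ → Z, (∀ n, ‖u n‖ ≤ 1) → Separated ε u →
      ∃ y ∈ convexHull ℝ (Set.range u), ‖y‖ ≤ δ


section Helpers

open Classical

lemma chi_apply (A : Finset Node) (ψ : Node) : chi A ψ = if ψ ∈ A then 1 else 0 := by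
  classical
  simp [chi, Finsupp.indicator_apply]

lemma chi_support_subset (A : Finset Node) : (chi A).support ⊆ A := by
  classical
  exact_mod_cast Finsupp.support_indicator_subset A _

lemma chi_union (A B : Finset Node) (h : Disjoint A B) : chi (A ∪ B) = chi A + chi B := by
  classical
  ext ψ
  rw [Finsupp.add_apply, chi_apply, chi_apply, chi_apply]
  by_cases hA : ψ ∈ A
  · have hB : ψ ∉ B := Finset.disjoint_left.mp h hA
    simp [hA, hB]
  · by_cases hB : ψ ∈ B <;> simp [hA, hB]

lemma Sset_eq_of_length_eq {σ φ ψ : Node} (hσ : ψ ∈ Sset σ) (hφ : ψ ∈ Sset φ)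
    (h : σ.length = φ.length) : σ = φ := by
  obtain ⟨k, rfl⟩ := hσ
  obtain ⟨k', he⟩ := hφ
  exact List.append_inj_left he h

/-- The defining set of values for `normY`. -/
def Yset (x : Node →₀ ℝ) : Set ℝ :=
  { r : ℝ | ∃ (k : ℕ) (A : Fin k → Finset Node),
    (∀ i, Acceptable (A i)) ∧ (∀ i j : Fin k, i < j → Before (A i) (A j)) ∧
    r = Real.sqrt (∑ i, (∑ φ ∈ A i, |x φ|) ^ 2) }

lemma normY_eq_sSup (x : Node →₀ ℝ) : normY x = sSup (Yset x) := rfl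

lemma Yset_le (x : Node →₀ ℝ) (s : Finset Node) (hs : x.support ⊆ s) :
    ∀ r ∈ Yset x, r ≤ ∑ φ ∈ s, |x φ| := by
  classical
  rintro r ⟨k, A, hacc, hbef, rfl⟩
  set S : ℝ := ∑ φ ∈ s, |x φ| with hS
  have hS0 : 0 ≤ S := Finset.sum_nonneg fun _ _ => abs_nonneg _
  have h1 : ∀ i : Fin k, ∑ φ ∈ A i, |x φ| = ∑ φ ∈ A i ∩ s, |x φ| := by
    intro i
    refine (Finset.sum_subset Finset.inter_subset_left ?_).symm
    intro φ hφ hφ'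
    have h2 : φ ∉ s := fun h => hφ' (Finset.mem_inter.mpr ⟨hφ, h⟩)
    have h3 : φ ∉ x.support := fun h => h2 (hs h)
    simpa [abs_eq_zero] using (Finsupp.notMem_support_iff.mp h3)
  have hdisj : ((Finset.univ : Finset (Fin k)) : Set (Fin k)).PairwiseDisjoint (fun i => A i ∩ s) := by
    intro i _ j _ hij
    rcases lt_or_gt_of_ne hij with h | h
    all_goals {
      refine Finset.disjoint_left.mpr fun φ hφi hφj => ?_
      have hi := Finset.mem_inter.mp hφi
      have hj := Finset.mem_inter.mp hφj
      first
      | exact absurd (hbef i j h φ hi.1 φ hj.1) (lt_irrefl _)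
      | exact absurd (hbef j i h φ hj.1 φ hi.1) (lt_irrefl _) }
  have h2 : ∑ i : Fin k, ∑ φ ∈ A i ∩ s, |x φ| ≤ S := by
    rw [← Finset.sum_biUnion hdisj]
    exact Finset.sum_le_sum_of_subset_of_nonneg
      (fun φ hφ => (Finset.mem_inter.mp (Finset.mem_biUnion.mp hφ).choose_spec.2).2)
      (fun _ _ _ => abs_nonneg _)
  have h3 : ∑ i : Fin k, (∑ φ ∈ A i, |x φ|) ^ 2 ≤ S ^ 2 := by
    refine le_trans (Finset.sum_sq_le_sq_sum_of_nonneg fun i _ =>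
      Finset.sum_nonneg fun _ _ => abs_nonneg _) ?_
    have h4 : ∑ i : Fin k, ∑ φ ∈ A i, |x φ| ≤ S := by
      rw [Finset.sum_congr rfl fun i _ => h1 i]; exact h2
    have h5 : 0 ≤ ∑ i : Fin k, ∑ φ ∈ A i, |x φ| :=
      Finset.sum_nonneg fun i _ => Finset.sum_nonneg fun _ _ => abs_nonneg _
    exact pow_le_pow_left₀ h5 h4 2
  calc Real.sqrt (∑ i, (∑ φ ∈ A i, |x φ|) ^ 2) ≤ Real.sqrt (S ^ 2) :=
        Real.sqrt_le_sqrt h3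
    _ = S := by rw [Real.sqrt_sq hS0]

lemma normY_le_sum (x : Node →₀ ℝ) (s : Finset Node) (hs : x.support ⊆ s) :
    normY x ≤ ∑ φ ∈ s, |x φ| :=
  Real.sSup_le (Yset_le x s hs) (Finset.sum_nonneg fun _ _ => abs_nonneg _)

lemma sum_abs_le_normY (B : Finset Node) (hB : Acceptable B) (x : Node →₀ ℝ) :
    ∑ φ ∈ B, |x φ| ≤ normY x := by
  have hmem : (∑ φ ∈ B, |x φ|) ∈ Yset x := by
    refine ⟨1, fun _ => B, fun _ => hB, ?_, ?_⟩
    · intro i j hij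
      have hi := i.2; have hj := j.2
      have := Fin.lt_iff_val_lt_val.mp hij
      omega
    · rw [Fin.sum_univ_one,
        Real.sqrt_sq (Finset.sum_nonneg fun _ _ => abs_nonneg _)]
  exact le_csSup ⟨∑ φ ∈ x.support, |x φ|, fun r hr => Yset_le x x.support subset_rfl r hr⟩ hmem

lemma acceptable_of_level (n : ℕ) (A : Finset Node)
    (ha : ∀ ψ ∈ A, ∃ φ : Node, φ.length = n ∧ ψ ∈ Sset φ)
    (hb : ∀ σ : Node, σ.length = n → ∀ φ ∈ A, ∀ ψ ∈ A, φ ∈ Sset σ → ψ ∈ Sset σ → φ = ψ) :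
    Acceptable A := ⟨n, ha, hb⟩

end Helpers


/-- Iterate a choice function. -/
def seqRec (g : Finset Node → Finset Node) (b : Finset Node) : ℕ → Finset Node
  | 0 => b
  | k + 1 => g (seqRec g b k)

lemma claim_main
    (Y : Type*) [NormedAddCommGroup Y] [NormedSpace ℝ Y]
    (j : (Node →₀ ℝ) →ₗ[ℝ] Y)
    (hiso : ∀ y : Node →₀ ℝ, ‖j y‖ = normY y)
    (N : Y → ℝ) (hN : IsNormF N) (ε : ℝ) (hε : 0 < ε)
    (hlow : ∀ x : Y, ε * ‖x‖ ≤ N x) (hup : ∀ x : Y, N x ≤ ‖x‖)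
    (δ : ℝ) (hδ0 : 0 < δ) (hδ1 : δ < 1)
    (hbeta : ∀ x : Y, N x ≤ 1 → ∀ u : ℕ → Y, (∀ n, N (u n) ≤ 1) →
      SeparatedWith N ε u → ∃ n : ℕ, N (x + u n) / 2 ≤ 1 - δ)
    (n : ℕ) :
    ∀ m : ℕ, ∀ Φ' : Finset Node, (∀ φ ∈ Φ', φ.length = n) → Φ'.card = 2 ^ m → ∀ p : ℕ,
    ∃ A : Finset Node,
      (∀ ψ ∈ A, ∃ φ ∈ Φ', ψ ∈ Sset φ) ∧
      (∀ σ : Node, σ.length = n → ∀ φ ∈ A, ∀ ψ ∈ A, φ ∈ Sset σ → ψ ∈ Sset σ → φ = ψ) ∧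
      A.card = 2 ^ m ∧ (∀ ψ ∈ A, p ≤ ψ.length) ∧
      N (j (chi A)) ≤ 2 ^ m * (1 - δ) ^ m := by
  classical
  intro m
  induction m with
  | zero =>
    intro Φ' hlen hcard p
    obtain ⟨φ₀, rfl⟩ := Finset.card_eq_one.mp (by simpa using hcard)
    refine ⟨{φ₀ ++ List.replicate p false}, ?_, ?_, by simp, ?_, ?_⟩
    · intro ψ hψ
      rw [Finset.mem_singleton] at hψ
      exact ⟨φ₀, Finset.mem_singleton_self _, ⟨p, hψ⟩⟩
    · intro σ _ φ hφ ψ hψ _ _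
      rw [Finset.mem_singleton] at hφ hψ; rw [hφ, hψ]
    · intro ψ hψ
      rw [Finset.mem_singleton] at hψ
      subst hψ; simp
    · have h1 := hup (j (chi ({φ₀ ++ List.replicate p false} : Finset Node)))
      rw [hiso] at h1
      have h2 := normY_le_sum (chi ({φ₀ ++ List.replicate p false} : Finset Node))
        {φ₀ ++ List.replicate p false} (chi_support_subset _)
      simp only [pow_zero, one_mul]
      refine le_trans h1 (le_trans h2 ?_)
      simp [chi_apply]
  | succ m ih =>
    intro Φ' hlen hcard p
    have h2pow : (0:ℕ) < 2 ^ m := pow_pos (by norm_num) m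
    have hcard2 : Φ'.card = 2 ^ m + 2 ^ m := by rw [hcard, pow_succ]; ring
    obtain ⟨Φ₁, hΦ₁sub, hΦ₁card⟩ := Finset.exists_subset_card_eq
      (show 2 ^ m ≤ Φ'.card by omega)
    have hΦ₂card : (Φ' \ Φ₁).card = 2 ^ m := by
      rw [Finset.card_sdiff_of_subset hΦ₁sub]; omega
    have hlen1 : ∀ φ ∈ Φ₁, φ.length = n := fun φ h => hlen φ (hΦ₁sub h)
    have hlen2 : ∀ φ ∈ Φ' \ Φ₁, φ.length = n := fun φ h => hlen φ (Finset.sdiff_subset h)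
    obtain ⟨A, hAa, hAb, hAcard, hAp, hAN⟩ := ih Φ₁ hlen1 hΦ₁card p
    set c : ℝ := 2 ^ m * (1 - δ) ^ m with hc
    have hδ' : (0:ℝ) < 1 - δ := by linarith
    have hc0 : 0 < c := by rw [hc]; positivity
    have key : ∀ q : ℕ, ∃ B : Finset Node,
        (∀ ψ ∈ B, ∃ φ ∈ Φ' \ Φ₁, ψ ∈ Sset φ) ∧
        (∀ σ : Node, σ.length = n → ∀ φ ∈ B, ∀ ψ ∈ B, φ ∈ Sset σ → ψ ∈ Sset σ → φ = ψ) ∧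
        B.card = 2 ^ m ∧ (∀ ψ ∈ B, q ≤ ψ.length) ∧
        N (j (chi B)) ≤ c := fun q => ih (Φ' \ Φ₁) hlen2 hΦ₂card q
    set f : ℕ → Finset Node :=
      seqRec (fun prev => Classical.choose (key (prev.sup List.length + 1)))
        (Classical.choose (key p)) with hfdef
    have hf0 : (∀ ψ ∈ f 0, ∃ φ ∈ Φ' \ Φ₁, ψ ∈ Sset φ) ∧
        (∀ σ : Node, σ.length = n → ∀ φ ∈ f 0, ∀ ψ ∈ f 0, φ ∈ Sset σ → ψ ∈ Sset σ → φ = ψ) ∧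
        (f 0).card = 2 ^ m ∧ (∀ ψ ∈ f 0, p ≤ ψ.length) ∧
        N (j (chi (f 0))) ≤ c := by
      rw [hfdef]; exact Classical.choose_spec (key p)
    have hfS : ∀ k : ℕ, (∀ ψ ∈ f (k+1), ∃ φ ∈ Φ' \ Φ₁, ψ ∈ Sset φ) ∧
        (∀ σ : Node, σ.length = n →
          ∀ φ ∈ f (k+1), ∀ ψ ∈ f (k+1), φ ∈ Sset σ → ψ ∈ Sset σ → φ = ψ) ∧
        (f (k+1)).card = 2 ^ m ∧
        (∀ ψ ∈ f (k+1), (f k).sup List.length + 1 ≤ ψ.length) ∧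
        N (j (chi (f (k+1)))) ≤ c := by
      intro k
      conv in f (k+1) => rw [hfdef]
      rw [hfdef]
      exact Classical.choose_spec (key (((seqRec _ _ k)).sup List.length + 1))
    have hfprop : ∀ k, (∀ ψ ∈ f k, ∃ φ ∈ Φ' \ Φ₁, ψ ∈ Sset φ) ∧
        (∀ σ : Node, σ.length = n → ∀ φ ∈ f k, ∀ ψ ∈ f k, φ ∈ Sset σ → ψ ∈ Sset σ → φ = ψ) ∧
        (f k).card = 2 ^ m ∧ N (j (chi (f k))) ≤ c := by
      intro k
      cases k with
      | zero => exact ⟨hf0.1, hf0.2.1, hf0.2.2.1, hf0.2.2.2.2⟩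
      | succ k => exact ⟨(hfS k).1, (hfS k).2.1, (hfS k).2.2.1, (hfS k).2.2.2.2⟩
    have hfne : ∀ k, (f k).Nonempty := fun k =>
      Finset.card_pos.mp (by rw [(hfprop k).2.2.1]; exact h2pow)
    have hford : ∀ k l : ℕ, k < l → ∀ φ ∈ f k, ∀ ψ ∈ f l, φ.length < ψ.length := by
      intro k l
      induction l with
      | zero => omega
      | succ l ihl =>
        intro hkl φ hφ ψ hψ
        have hsup : (f l).sup List.length + 1 ≤ ψ.length := (hfS l).2.2.2.1 ψ hψ
        rcases Nat.lt_succ_iff_lt_or_eq.mp hkl with h | h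
        · obtain ⟨χ, hχ⟩ := hfne l
          have h1 : φ.length < χ.length := ihl h φ hφ χ hχ
          have h2 : χ.length ≤ (f l).sup List.length := Finset.le_sup (f := List.length) hχ
          omega
        · subst h
          have h2 : φ.length ≤ (f k).sup List.length := Finset.le_sup (f := List.length) hφ
          omega
    have hfp : ∀ k, ∀ ψ ∈ f k, p ≤ ψ.length := by
      intro k
      induction k with
      | zero => exact hf0.2.2.2.1
      | succ k ihk =>
        intro ψ hψ
        obtain ⟨χ, hχ⟩ := hfne k
        have h1 := (hfS k).2.2.2.1 ψ hψ
        have h2 : χ.length ≤ (f k).sup List.length := Finset.le_sup (f := List.length) hχ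
        have h3 : p ≤ χ.length := ihk χ hχ
        omega
    have hfdisj : ∀ k l, k ≠ l → Disjoint (f k) (f l) := by
      intro k l hkl
      refine Finset.disjoint_left.mpr fun φ h1 h2 => ?_
      rcases lt_or_gt_of_ne hkl with h | h
      · exact absurd (hford k l h φ h1 φ h2) (lt_irrefl _)
      · exact absurd (hford l k h φ h2 φ h1) (lt_irrefl _)
    have hfacc : ∀ k, Acceptable (f k) := by
      intro k
      refine acceptable_of_level n (f k) ?_ (hfprop k).2.1
      intro ψ hψ
      obtain ⟨φ, hφ, h⟩ := (hfprop k).1 ψ hψ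
      exact ⟨φ, hlen2 φ hφ, h⟩
    have hNsmul : ∀ (a : ℝ) (v : Y), N (a • v) = |a| * N v := hN.2.1
    have hcinv : (0:ℝ) < c⁻¹ := inv_pos.mpr hc0
    have hu1 : ∀ k, N (c⁻¹ • j (chi (f k))) ≤ 1 := by
      intro k
      rw [hNsmul, abs_of_pos hcinv]
      calc c⁻¹ * N (j (chi (f k))) ≤ c⁻¹ * c :=
            mul_le_mul_of_nonneg_left (hfprop k).2.2.2 hcinv.le
        _ = 1 := inv_mul_cancel₀ hc0.ne'
    have hc2 : c ≤ 2 ^ m := by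
      rw [hc]
      calc (2:ℝ) ^ m * (1 - δ) ^ m ≤ 2 ^ m * 1 :=
            mul_le_mul_of_nonneg_left (pow_le_one₀ hδ'.le (by linarith)) (by positivity)
        _ = 2 ^ m := mul_one _
    have husep : SeparatedWith N ε (fun k => c⁻¹ • j (chi (f k))) := by
      intro a b hab
      show ε ≤ N (c⁻¹ • j (chi (f a)) - c⁻¹ • j (chi (f b)))
      have hd : c⁻¹ • j (chi (f a)) - c⁻¹ • j (chi (f b))
          = c⁻¹ • j (chi (f a) - chi (f b)) := by rw [map_sub, smul_sub]
      have hsum : ∑ φ ∈ f a, |(chi (f a) - chi (f b)) φ| = (2:ℝ) ^ m := by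
        have hone : ∀ φ ∈ f a, |(chi (f a) - chi (f b)) φ| = 1 := by
          intro φ hφ
          have h1 : φ ∉ f b := Finset.disjoint_left.mp (hfdisj a b hab) hφ
          rw [Finsupp.sub_apply, chi_apply, chi_apply, if_pos hφ, if_neg h1]
          norm_num
        rw [Finset.sum_congr rfl hone, Finset.sum_const, (hfprop a).2.2.1]
        simp
      have hY : (2:ℝ) ^ m ≤ normY (chi (f a) - chi (f b)) := by
        rw [← hsum]; exact sum_abs_le_normY _ (hfacc a) _
      have hNd : ε * (2:ℝ) ^ m ≤ N (j (chi (f a) - chi (f b))) := by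
        refine le_trans ?_ (hlow _)
        rw [hiso]
        exact mul_le_mul_of_nonneg_left hY hε.le
      rw [hd, hNsmul, abs_of_pos hcinv, le_inv_mul_iff₀ hc0]
      calc c * ε = ε * c := mul_comm _ _
        _ ≤ ε * 2 ^ m := mul_le_mul_of_nonneg_left hc2 hε.le
        _ ≤ N (j (chi (f a) - chi (f b))) := hNd
    have hx1 : N (c⁻¹ • j (chi A)) ≤ 1 := by
      rw [hNsmul, abs_of_pos hcinv]
      calc c⁻¹ * N (j (chi A)) ≤ c⁻¹ * c :=
            mul_le_mul_of_nonneg_left hAN hcinv.le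
        _ = 1 := inv_mul_cancel₀ hc0.ne'
    obtain ⟨n₀, hn₀⟩ := hbeta (c⁻¹ • j (chi A)) hx1 _ hu1 husep
    have hn₀' : N (c⁻¹ • j (chi A) + c⁻¹ • j (chi (f n₀))) / 2 ≤ 1 - δ := hn₀
    have hABdisj : Disjoint A (f n₀) := by
      refine Finset.disjoint_left.mpr fun ψ h1 h2 => ?_
      obtain ⟨φ₁, hφ₁, hs1⟩ := hAa ψ h1
      obtain ⟨φ₂, hφ₂, hs2⟩ := (hfprop n₀).1 ψ h2
      have he : φ₁ = φ₂ := Sset_eq_of_length_eq hs1 hs2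
        (by rw [hlen1 φ₁ hφ₁, hlen2 φ₂ hφ₂])
      rw [he] at hφ₁
      exact (Finset.mem_sdiff.mp hφ₂).2 hφ₁
    refine ⟨A ∪ f n₀, ?_, ?_, ?_, ?_, ?_⟩
    · intro ψ hψ
      rcases Finset.mem_union.mp hψ with h | h
      · obtain ⟨φ, hφ, hs⟩ := hAa ψ h; exact ⟨φ, hΦ₁sub hφ, hs⟩
      · obtain ⟨φ, hφ, hs⟩ := (hfprop n₀).1 ψ h
        exact ⟨φ, (Finset.mem_sdiff.mp hφ).1, hs⟩
    · intro σ hσ φ hφ ψ hψ h1 h2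
      have hmix : ∀ χ₁ ∈ A, ∀ χ₂ ∈ f n₀, χ₁ ∈ Sset σ → χ₂ ∈ Sset σ → False := by
        intro χ₁ hχ₁ χ₂ hχ₂ hs1 hs2
        obtain ⟨φ₁, hφ₁, hss1⟩ := hAa χ₁ hχ₁
        obtain ⟨φ₂, hφ₂, hss2⟩ := (hfprop n₀).1 χ₂ hχ₂
        have e1 : σ = φ₁ := Sset_eq_of_length_eq hs1 hss1 (by rw [hσ, hlen1 φ₁ hφ₁])
        have e2 : σ = φ₂ := Sset_eq_of_length_eq hs2 hss2 (by rw [hσ, hlen2 φ₂ hφ₂])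
        rw [e1] at e2
        rw [e2] at hφ₁
        exact (Finset.mem_sdiff.mp hφ₂).2 hφ₁
      rcases Finset.mem_union.mp hφ with hA1 | hB1 <;>
        rcases Finset.mem_union.mp hψ with hA2 | hB2
      · exact hAb σ hσ φ hA1 ψ hA2 h1 h2
      · exact absurd (hmix φ hA1 ψ hB2 h1 h2) not_false
      · exact absurd (hmix ψ hA2 φ hB1 h2 h1) not_false
      · exact (hfprop n₀).2.1 σ hσ φ hB1 ψ hB2 h1 h2
    · rw [Finset.card_union_of_disjoint hABdisj, hAcard, (hfprop n₀).2.2.1, pow_succ]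
      ring
    · intro ψ hψ
      rcases Finset.mem_union.mp hψ with h | h
      · exact hAp ψ h
      · exact hfp n₀ ψ h
    · have hsum : chi (A ∪ f n₀) = chi A + chi (f n₀) := chi_union A (f n₀) hABdisj
      have hjeq : j (chi (A ∪ f n₀)) = c • (c⁻¹ • j (chi A) + c⁻¹ • j (chi (f n₀))) := by
        rw [hsum, map_add, smul_add, smul_smul, smul_smul,
          mul_inv_cancel₀ hc0.ne', one_smul, one_smul]
      rw [hjeq, hNsmul, abs_of_pos hc0]
      have hN2 : N (c⁻¹ • j (chi A) + c⁻¹ • j (chi (f n₀))) ≤ 2 * (1 - δ) := by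
        linarith
      calc c * N (c⁻¹ • j (chi A) + c⁻¹ • j (chi (f n₀))) ≤ c * (2 * (1 - δ)) :=
            mul_le_mul_of_nonneg_left hN2 hc0.le
        _ = 2 ^ (m + 1) * (1 - δ) ^ (m + 1) := by rw [hc]; ring

/-- **Proposition 6.** Suppose `N = |||·|||` is an equivalent norm on `Y` (the
completion of `(c₀₀(T), ‖·‖_Y)`, represented by a Banach space `Y` with a dense
linear isometry `j`) with `ε ‖x‖ ≤ N x ≤ ‖x‖`, and `δ ∈ (0,1)` witnesses the `1`-β
condition for `N` at separation constant `ε`.  Let `Φ' ⊆ {φ : |φ| = n}` with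
`|Φ'| = 2^m` (`m ≤ n`) and `p ∈ ℕ`.  Then there is an acceptable set
`A ⊆ ⋃_{φ ∈ Φ'} S_φ` with `|A| = 2^m`, `min{|φ| : φ ∈ A} ≥ p`, and
`N (χ_A) ≤ 2^m (1-δ)^m`. -/
theorem proposition_Y_one_beta
    (Y : Type*) [NormedAddCommGroup Y] [NormedSpace ℝ Y] [CompleteSpace Y]
    (j : (Node →₀ ℝ) →ₗ[ℝ] Y) (hdense : DenseRange j)
    (hiso : ∀ y : Node →₀ ℝ, ‖j y‖ = normY y)
    (N : Y → ℝ) (hN : IsNormF N) (ε : ℝ) (hε : 0 < ε)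
    (hlow : ∀ x : Y, ε * ‖x‖ ≤ N x) (hup : ∀ x : Y, N x ≤ ‖x‖)
    (δ : ℝ) (hδ0 : 0 < δ) (hδ1 : δ < 1)
    (hbeta : ∀ x : Y, N x ≤ 1 → ∀ u : ℕ → Y, (∀ n, N (u n) ≤ 1) →
      SeparatedWith N ε u → ∃ n : ℕ, N (x + u n) / 2 ≤ 1 - δ)
    (n m : ℕ) (hmn : m ≤ n) (Φ' : Finset Node)
    (hΦ'len : ∀ φ ∈ Φ', φ.length = n) (hΦ'card : Φ'.card = 2 ^ m) (p : ℕ) :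
    ∃ A : Finset Node, Acceptable A ∧ (∀ ψ ∈ A, ∃ φ ∈ Φ', ψ ∈ Sset φ) ∧
      A.card = 2 ^ m ∧ (∀ ψ ∈ A, p ≤ ψ.length) ∧
      N (j (chi A)) ≤ 2 ^ m * (1 - δ) ^ m := by
  obtain ⟨A, ha, hb, hcard, hp, hNb⟩ :=
    claim_main Y j hiso N hN ε hε hlow hup δ hδ0 hδ1 hbeta n m Φ' hΦ'len hΦ'card p
  refine ⟨A, ?_, ha, hcard, hp, hNb⟩
  refine acceptable_of_level n A ?_ hb
  intro ψ hψ
  obtain ⟨φ, hφ, h⟩ := ha ψ hψ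
  exact ⟨φ, hΦ'len φ hφ, h⟩
end

section
/- If y, z ∈ c₀₀(T) and supp y ≪ supp z, then ‖y + z‖_Y² ≥ ‖y‖_Y² + ‖z‖_Y². -/
open scoped BigOperators

section Aux

lemma acceptable_subset {A B : Finset Node} (hB : Acceptable B) (hs : A ⊆ B) :
    Acceptable A := by
  obtain ⟨n, h1, h2⟩ := hB
  exact ⟨n, fun φ hφ => h1 φ (hs hφ),
    fun σ hσ φ hφ ψ hψ h1' h2' => h2 σ hσ φ (hs hφ) ψ (hs hψ) h1' h2'⟩

lemma before_subset {A A' B B' : Finset Node} (h : Before A B) (hA : A' ⊆ A)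
    (hB : B' ⊆ B) : Before A' B' :=
  fun φ hφ ψ hψ => h φ (hA hφ) ψ (hB hψ)

lemma sum_abs_inter_support (x : Node →₀ ℝ) (A : Finset Node) :
    ∑ φ ∈ A ∩ x.support, |x φ| = ∑ φ ∈ A, |x φ| := by
  refine Finset.sum_subset Finset.inter_subset_left (fun φ hφ hn => ?_)
  have : φ ∉ x.support := fun hs => hn (Finset.mem_inter.mpr ⟨hφ, hs⟩)
  simp [Finsupp.notMem_support_iff.mp this]

/-- Every value in the defining set of `normY x` is at most `∑ |x φ|`. -/
lemma normY_set_bound (x : Node →₀ ℝ) {r : ℝ}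
    (hr : r ∈ { r : ℝ | ∃ (k : ℕ) (A : Fin k → Finset Node),
      (∀ i, Acceptable (A i)) ∧ (∀ i j : Fin k, i < j → Before (A i) (A j)) ∧
      r = Real.sqrt (∑ i, (∑ φ ∈ A i, |x φ|) ^ 2) }) :
    r ≤ ∑ φ ∈ x.support, |x φ| := by
  obtain ⟨k, A, -, hchain, rfl⟩ := hr
  have hdisj : ((Finset.univ : Finset (Fin k)) : Set (Fin k)).PairwiseDisjoint
      (fun i => A i ∩ x.support) := by
    intro i _ j _ hij
    rcases lt_or_gt_of_ne hij with hlt | hlt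
    · refine Finset.disjoint_left.mpr (fun φ hφi hφj => ?_)
      exact lt_irrefl φ.length
        (hchain i j hlt φ (Finset.mem_inter.mp hφi).1 φ (Finset.mem_inter.mp hφj).1)
    · refine Finset.disjoint_left.mpr (fun φ hφi hφj => ?_)
      exact lt_irrefl φ.length
        (hchain j i hlt φ (Finset.mem_inter.mp hφj).1 φ (Finset.mem_inter.mp hφi).1)
  have hsum : ∑ i : Fin k, ∑ φ ∈ A i, |x φ| ≤ ∑ φ ∈ x.support, |x φ| := by
    calc ∑ i : Fin k, ∑ φ ∈ A i, |x φ|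
        = ∑ i : Fin k, ∑ φ ∈ A i ∩ x.support, |x φ| := by
          simp [sum_abs_inter_support]
      _ = ∑ φ ∈ Finset.univ.biUnion (fun i => A i ∩ x.support), |x φ| :=
          (Finset.sum_biUnion hdisj).symm
      _ ≤ ∑ φ ∈ x.support, |x φ| := by
          refine Finset.sum_le_sum_of_subset_of_nonneg ?_ (fun _ _ _ => abs_nonneg _)
          intro φ hφ
          obtain ⟨i, -, hi⟩ := Finset.mem_biUnion.mp hφ
          exact (Finset.mem_inter.mp hi).2
  have h1 : ∑ i : Fin k, (∑ φ ∈ A i, |x φ|) ^ 2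
      ≤ (∑ φ ∈ x.support, |x φ|) ^ 2 := by
    calc ∑ i : Fin k, (∑ φ ∈ A i, |x φ|) ^ 2
        ≤ (∑ i : Fin k, ∑ φ ∈ A i, |x φ|) ^ 2 :=
          Finset.sum_sq_le_sq_sum_of_nonneg
            (fun i _ => Finset.sum_nonneg fun _ _ => abs_nonneg _)
      _ ≤ (∑ φ ∈ x.support, |x φ|) ^ 2 := by
          apply pow_le_pow_left₀
            (Finset.sum_nonneg fun _ _ => Finset.sum_nonneg fun _ _ => abs_nonneg _) hsum
  calc Real.sqrt (∑ i, (∑ φ ∈ A i, |x φ|) ^ 2)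
      ≤ Real.sqrt ((∑ φ ∈ x.support, |x φ|) ^ 2) := Real.sqrt_le_sqrt h1
    _ = ∑ φ ∈ x.support, |x φ| :=
        Real.sqrt_sq (Finset.sum_nonneg fun _ _ => abs_nonneg _)

lemma normY_set_nonempty (x : Node →₀ ℝ) :
    (0:ℝ) ∈ { r : ℝ | ∃ (k : ℕ) (A : Fin k → Finset Node),
      (∀ i, Acceptable (A i)) ∧ (∀ i j : Fin k, i < j → Before (A i) (A j)) ∧
      r = Real.sqrt (∑ i, (∑ φ ∈ A i, |x φ|) ^ 2) } := by
  refine ⟨0, Fin.elim0, fun i => i.elim0, fun i => i.elim0, ?_⟩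
  simp

end Aux

/-- If `y, z ∈ c₀₀(T)` and `supp y ≪ supp z`, then `‖y + z‖_Y² ≥ ‖y‖_Y² + ‖z‖_Y²`. -/
theorem normY_sq_superadditive (y z : Node →₀ ℝ) (h : Before y.support z.support) :
    normY y ^ 2 + normY z ^ 2 ≤ normY (y + z) ^ 2 := by
  classical
  set Sy := { r : ℝ | ∃ (k : ℕ) (A : Fin k → Finset Node),
      (∀ i, Acceptable (A i)) ∧ (∀ i j : Fin k, i < j → Before (A i) (A j)) ∧
      r = Real.sqrt (∑ i, (∑ φ ∈ A i, |y φ|) ^ 2) } with hSy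
  set Sz := { r : ℝ | ∃ (k : ℕ) (A : Fin k → Finset Node),
      (∀ i, Acceptable (A i)) ∧ (∀ i j : Fin k, i < j → Before (A i) (A j)) ∧
      r = Real.sqrt (∑ i, (∑ φ ∈ A i, |z φ|) ^ 2) } with hSz
  set Sw := { r : ℝ | ∃ (k : ℕ) (A : Fin k → Finset Node),
      (∀ i, Acceptable (A i)) ∧ (∀ i j : Fin k, i < j → Before (A i) (A j)) ∧
      r = Real.sqrt (∑ i, (∑ φ ∈ A i, |(y + z) φ|) ^ 2) } with hSw
  have hNy : normY y = sSup Sy := rfl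
  have hNz : normY z = sSup Sz := rfl
  have hNw : normY (y + z) = sSup Sw := rfl
  have hbddw : BddAbove Sw := ⟨_, fun r hr => normY_set_bound (y + z) hr⟩
  have hne_y : Sy.Nonempty := ⟨0, normY_set_nonempty y⟩
  have hne_z : Sz.Nonempty := ⟨0, normY_set_nonempty z⟩
  have hNnn : 0 ≤ normY (y + z) := by
    rw [hNw]
    exact Real.sSup_nonneg (fun r hr => by
      obtain ⟨k, A, -, -, rfl⟩ := hr; exact Real.sqrt_nonneg _)
  -- supports are disjoint
  have hzero : ∀ φ ∈ y.support, z φ = 0 := by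
    intro φ hφ
    by_contra hz
    exact lt_irrefl φ.length (h φ hφ φ (Finsupp.mem_support_iff.mpr hz))
  -- key claim
  have key : ∀ r₁ ∈ Sy, ∀ r₂ ∈ Sz, r₁ ^ 2 + r₂ ^ 2 ≤ normY (y + z) ^ 2 := by
    intro r₁ hr₁ r₂ hr₂
    obtain ⟨k₁, A, hAacc, hAch, rfl⟩ := hr₁
    obtain ⟨k₂, B, hBacc, hBch, rfl⟩ := hr₂
    set A' : Fin k₁ → Finset Node := fun i => A i ∩ y.support with hA'
    set B' : Fin k₂ → Finset Node := fun j => B j ∩ z.support with hB'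
    set C : Fin (k₁ + k₂) → Finset Node := Fin.addCases A' B' with hC
    have hCacc : ∀ i, Acceptable (C i) := by
      refine Fin.addCases (fun i => ?_) (fun j => ?_)
      · simp only [hC, Fin.addCases_left]
        exact acceptable_subset (hAacc i) Finset.inter_subset_left
      · simp only [hC, Fin.addCases_right]
        exact acceptable_subset (hBacc j) Finset.inter_subset_left
    have hAB : ∀ (i : Fin k₁) (j : Fin k₂), Before (A' i) (B' j) := by
      intro i j φ hφ ψ hψ
      exact h φ (Finset.mem_inter.mp hφ).2 ψ (Finset.mem_inter.mp hψ).2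
    have hCch : ∀ i j : Fin (k₁ + k₂), i < j → Before (C i) (C j) := by
      refine Fin.addCases (fun i => ?_) (fun i => ?_) <;>
        refine Fin.addCases (fun j => ?_) (fun j => ?_) <;> intro hij
      · simp only [hC, Fin.addCases_left]
        have : i < j := by
          rw [Fin.lt_def] at hij ⊢
          simpa using hij
        exact before_subset (hAch i j this) Finset.inter_subset_left
          Finset.inter_subset_left
      · simp only [hC, Fin.addCases_left, Fin.addCases_right]
        exact hAB i j
      · exfalso
        have := hij
        simp only [Fin.lt_def, Fin.coe_castAdd, Fin.coe_natAdd] at this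
        omega
      · simp only [hC, Fin.addCases_right]
        have : i < j := by
          simp only [Fin.lt_def, Fin.coe_natAdd] at hij ⊢
          omega
        exact before_subset (hBch i j this) Finset.inter_subset_left
          Finset.inter_subset_left
    have hsumA : ∀ i : Fin k₁, ∑ φ ∈ A' i, |(y + z) φ| = ∑ φ ∈ A i, |y φ| := by
      intro i
      rw [hA']
      rw [show (∑ φ ∈ A i ∩ y.support, |(y + z) φ|) = ∑ φ ∈ A i ∩ y.support, |y φ| from
        Finset.sum_congr rfl (fun φ hφ => by
          have hy := (Finset.mem_inter.mp hφ).2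
          simp [Finsupp.add_apply, hzero φ hy])]
      exact sum_abs_inter_support y (A i)
    have hsumB : ∀ j : Fin k₂, ∑ φ ∈ B' j, |(y + z) φ| = ∑ φ ∈ B j, |z φ| := by
      intro j
      rw [hB']
      rw [show (∑ φ ∈ B j ∩ z.support, |(y + z) φ|) = ∑ φ ∈ B j ∩ z.support, |z φ| from
        Finset.sum_congr rfl (fun φ hφ => by
          have hz := (Finset.mem_inter.mp hφ).2
          have hy : y φ = 0 := by
            by_contra hy
            exact lt_irrefl φ.length
              (h φ (Finsupp.mem_support_iff.mpr hy) φ hz)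
          simp [Finsupp.add_apply, hy])]
      exact sum_abs_inter_support z (B j)
    have hsum : ∑ i : Fin (k₁ + k₂), (∑ φ ∈ C i, |(y + z) φ|) ^ 2
        = (∑ i : Fin k₁, (∑ φ ∈ A i, |y φ|) ^ 2)
          + (∑ j : Fin k₂, (∑ φ ∈ B j, |z φ|) ^ 2) := by
      rw [Fin.sum_univ_add]
      congr 1
      · refine Finset.sum_congr rfl (fun i _ => ?_)
        simp only [hC, Fin.addCases_left]; rw [hsumA]
      · refine Finset.sum_congr rfl (fun j _ => ?_)
        simp only [hC, Fin.addCases_right]; rw [hsumB]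
    have hmem : Real.sqrt (∑ i : Fin (k₁ + k₂), (∑ φ ∈ C i, |(y + z) φ|) ^ 2) ∈ Sw :=
      ⟨k₁ + k₂, C, hCacc, hCch, rfl⟩
    have hle : Real.sqrt (∑ i : Fin (k₁ + k₂), (∑ φ ∈ C i, |(y + z) φ|) ^ 2) ≤ normY (y + z) := by
      rw [hNw]; exact le_csSup hbddw hmem
    have h2 : (Real.sqrt (∑ i : Fin (k₁ + k₂), (∑ φ ∈ C i, |(y + z) φ|) ^ 2)) ^ 2
        ≤ normY (y + z) ^ 2 := pow_le_pow_left₀ (Real.sqrt_nonneg _) hle 2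
    rw [Real.sq_sqrt (Finset.sum_nonneg fun _ _ => sq_nonneg _), hsum] at h2
    have e1 : Real.sqrt (∑ i, (∑ φ ∈ A i, |y φ|) ^ 2) ^ 2
        = ∑ i, (∑ φ ∈ A i, |y φ|) ^ 2 :=
      Real.sq_sqrt (Finset.sum_nonneg fun _ _ => sq_nonneg _)
    have e2 : Real.sqrt (∑ j, (∑ φ ∈ B j, |z φ|) ^ 2) ^ 2
        = ∑ j, (∑ φ ∈ B j, |z φ|) ^ 2 :=
      Real.sq_sqrt (Finset.sum_nonneg fun _ _ => sq_nonneg _)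
    rw [e1, e2]
    exact h2
  -- now take suprema
  have hbnn : 0 ≤ normY z := by
    rw [hNz]
    exact Real.sSup_nonneg (fun r hr => by
      obtain ⟨k, A, -, -, rfl⟩ := hr; exact Real.sqrt_nonneg _)
  have step1 : ∀ r₁ ∈ Sy, r₁ ^ 2 + normY z ^ 2 ≤ normY (y + z) ^ 2 := by
    intro r₁ hr₁
    have hr₁sq : r₁ ^ 2 ≤ normY (y + z) ^ 2 := by
      have := key r₁ hr₁ 0 (normY_set_nonempty z)
      simpa using this
    have hzle : normY z ≤ Real.sqrt (normY (y + z) ^ 2 - r₁ ^ 2) := by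
      rw [hNz]
      refine csSup_le hne_z (fun r₂ hr₂ => ?_)
      have hk := key r₁ hr₁ r₂ hr₂
      have hr₂nn : 0 ≤ r₂ := by
        obtain ⟨k, A, -, -, rfl⟩ := hr₂; exact Real.sqrt_nonneg _
      have : r₂ ^ 2 ≤ normY (y + z) ^ 2 - r₁ ^ 2 := by linarith
      calc r₂ = Real.sqrt (r₂ ^ 2) := (Real.sqrt_sq hr₂nn).symm
        _ ≤ Real.sqrt (normY (y + z) ^ 2 - r₁ ^ 2) := Real.sqrt_le_sqrt this
    have : normY z ^ 2 ≤ normY (y + z) ^ 2 - r₁ ^ 2 := by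
      have h2 := pow_le_pow_left₀ hbnn hzle 2
      rwa [Real.sq_sqrt (by linarith : (0:ℝ) ≤ normY (y + z) ^ 2 - r₁ ^ 2)] at h2
    linarith
  have hann : 0 ≤ normY y := by
    rw [hNy]
    exact Real.sSup_nonneg (fun r hr => by
      obtain ⟨k, A, -, -, rfl⟩ := hr; exact Real.sqrt_nonneg _)
  have hbsq : normY z ^ 2 ≤ normY (y + z) ^ 2 := by
    have := step1 0 (normY_set_nonempty y)
    simpa using this
  have hyle : normY y ≤ Real.sqrt (normY (y + z) ^ 2 - normY z ^ 2) := by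
    rw [hNy]
    refine csSup_le hne_y (fun r₁ hr₁ => ?_)
    have hr₁nn : 0 ≤ r₁ := by
      obtain ⟨k, A, -, -, rfl⟩ := hr₁; exact Real.sqrt_nonneg _
    have := step1 r₁ hr₁
    calc r₁ = Real.sqrt (r₁ ^ 2) := (Real.sqrt_sq hr₁nn).symm
      _ ≤ Real.sqrt (normY (y + z) ^ 2 - normY z ^ 2) := Real.sqrt_le_sqrt (by linarith)
  have : normY y ^ 2 ≤ normY (y + z) ^ 2 - normY z ^ 2 := by
    have h2 := pow_le_pow_left₀ hann hyle 2
    rwa [Real.sq_sqrt (by linarith : (0:ℝ) ≤ normY (y + z) ^ 2 - normY z ^ 2)] at h2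
  linarith
end
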